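/- arXiv:2509.19211 — 6 statements merged into one kernel-verified Lean document; each statement's English description precedes it below -/
import Mathlib

section
/- Let R be a commutative local ring with maximal ideal m, and let M′ be an R-module such that R is not a direct summand of M′ (equivalently, there is no surjective R-linear map M′ → R). Set M = R × M′. Then there exists a surjective ring homomorphism from the endomorphism ring End_R(M) onto the residue field R/m; it is given by sending f ∈ End_R(M) to the class modulo m of the R-component of f(1,0). -/
/-- **Lemma 2.1.5.2.** Let `R` be a commutative local ring with maximal ideal `m`, and let
`M′` be an `R`-module such that `R` is not a direct summand of `M′` (equivalently, there is
no surjective `R`-linear map `M′ → R`).  Set `M = R × M′`.  Then there is a surjective ring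
homomorphism from the endomorphism ring `End_R(M)` onto the residue field `R/m`, given by
sending `f` to the class modulo `m` of the `R`-component of `f (1, 0)`. -/
theorem endRing_quotient_residueField (R : Type*) [CommRing R] [IsLocalRing R]
    (M' : Type*) [AddCommGroup M'] [Module R M']
    (h : ¬ ∃ f : M' →ₗ[R] R, Function.Surjective f) :
    ∃ φ : Module.End R (R × M') →+* IsLocalRing.ResidueField R,
      Function.Surjective φ ∧
        ∀ f : Module.End R (R × M'), φ f = IsLocalRing.residue R (f (1, 0)).1 := by
  have key : ∀ (f : Module.End R (R × M')) (m : M'),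
      (f (0, m)).1 ∈ IsLocalRing.maximalIdeal R := by
    intro f m
    set g : M' →ₗ[R] R := (LinearMap.fst R R M').comp (f.comp (LinearMap.inr R R M')) with hg
    have hr : LinearMap.range g ≠ ⊤ := fun ht => h ⟨g, LinearMap.range_eq_top.mp ht⟩
    exact IsLocalRing.le_maximalIdeal hr ⟨m, rfl⟩
  have keymul : ∀ f g : Module.End R (R × M'),
      IsLocalRing.residue R ((f * g) (1, 0)).1 =
        IsLocalRing.residue R (f (1, 0)).1 * IsLocalRing.residue R (g (1, 0)).1 := by
    intro f g
    have h1 : (f * g) ((1 : R), (0 : M')) = f (g (1, 0)) := rfl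
    have h2 : g ((1 : R), (0 : M')) =
        (g (1, 0)).1 • ((1 : R), (0 : M')) + ((0 : R), (g (1, 0)).2) := by
      simp [Prod.ext_iff]
    have h3 : (f * g) ((1 : R), (0 : M')) =
        (g (1, 0)).1 • f (1, 0) + f (0, (g (1, 0)).2) := by
      rw [h1]; conv_lhs => rw [h2]
      rw [map_add, map_smul]
    have h4 : ((f * g) ((1 : R), (0 : M'))).1 =
        (g (1, 0)).1 * (f (1, 0)).1 + (f (0, (g (1, 0)).2)).1 := by
      rw [h3]; rfl
    rw [h4, map_add, map_mul]
    have : IsLocalRing.residue R (f (0, (g (1, 0)).2)).1 = 0 :=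
      (Ideal.Quotient.eq_zero_iff_mem).mpr (key f _)
    rw [this, add_zero, mul_comm]
  refine ⟨{ toFun := fun f => IsLocalRing.residue R (f (1, 0)).1,
            map_one' := by
              show IsLocalRing.residue R ((1 : Module.End R (R × M')) (1, 0)).1 = 1
              simp,
            map_mul' := keymul,
            map_zero' := by simp,
            map_add' := by intro f g; simp }, ?_, fun f => rfl⟩
  intro x
  obtain ⟨r, hr⟩ := Ideal.Quotient.mk_surjective x
  refine ⟨r • 1, ?_⟩
  show IsLocalRing.residue R ((r • (1 : Module.End R (R × M'))) (1, 0)).1 = x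
  simp
  exact hr
end

section
/- Let S = ℂ[x,y] be the polynomial ring in two variables over ℂ, let R ⊆ S be the subalgebra of polynomials all of whose monomials have even total degree, and let S′ ⊆ S be the R-submodule of polynomials all of whose monomials have odd total degree. Then there is no surjective R-linear map from S′ onto R; equivalently, R is not a direct summand of the R-module S′. -/
noncomputable section
open MvPolynomial

def evenSubalgebra : Subalgebra ℂ (MvPolynomial (Fin 2) ℂ) where
  carrier := {p | ∀ d ∈ p.support, Even (∑ i, d i)}
  add_mem' := fun {p q} hp hq d hd => by
    rcases Finset.mem_union.mp (MvPolynomial.support_add hd) with h | h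
    · exact hp d h
    · exact hq d h
  mul_mem' := fun {p q} hp hq d hd => by
    obtain ⟨a, ha, b, hb, rfl⟩ := Finset.mem_add.mp (MvPolynomial.support_mul p q hd)
    have : (∑ i, (a + b) i) = (∑ i, a i) + (∑ i, b i) := by
      simp [Finsupp.add_apply, Finset.sum_add_distrib]
    rw [this]
    exact (hp a ha).add (hq b hb)
  algebraMap_mem' := fun c d hd => by
    have h1 : MvPolynomial.coeff d (MvPolynomial.C c : MvPolynomial (Fin 2) ℂ) ≠ 0 :=
      MvPolynomial.mem_support_iff.mp hd
    rw [MvPolynomial.coeff_C] at h1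
    have : d = 0 := by
      by_contra hne
      simp [Ne.symm hne] at h1
    subst this
    simp

/-- The `R`-submodule `S′` of `ℂ[x,y]` of polynomials all of whose monomials have odd
total degree, where `R` is the even subalgebra. -/
def oddSubmodule : Submodule evenSubalgebra (MvPolynomial (Fin 2) ℂ) where
  carrier := {p | ∀ d ∈ p.support, Odd (∑ i, d i)}
  add_mem' := fun {p q} hp hq d hd => by
    rcases Finset.mem_union.mp (MvPolynomial.support_add hd) with h | h
    · exact hp d h
    · exact hq d h
  zero_mem' := fun d hd => by simp at hd
  smul_mem' := fun c p hp d hd => by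
    have hcp : (c • p : MvPolynomial (Fin 2) ℂ) = (c : MvPolynomial (Fin 2) ℂ) * p := by
      rw [Algebra.smul_def]
      rfl
    rw [hcp] at hd
    obtain ⟨a, ha, b, hb, rfl⟩ :=
      Finset.mem_add.mp (MvPolynomial.support_mul (c : MvPolynomial (Fin 2) ℂ) p hd)
    have : (∑ i, (a + b) i) = (∑ i, a i) + (∑ i, b i) := by
      simp [Finsupp.add_apply, Finset.sum_add_distrib]
    rw [this]
    exact (c.2 a ha).add_odd (hp b hb)


lemma aux_X_mem_odd (i : Fin 2) : (X i : MvPolynomial (Fin 2) ℂ) ∈ oddSubmodule := by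
  intro d hd
  rw [MvPolynomial.support_X] at hd
  simp only [Finset.mem_singleton] at hd
  subst hd
  simp [Finsupp.single_apply, Finset.sum_ite_eq]

lemma aux_X_mul_mem_even {p : MvPolynomial (Fin 2) ℂ} (hp : p ∈ oddSubmodule) (i : Fin 2) :
    (X i : MvPolynomial (Fin 2) ℂ) * p ∈ evenSubalgebra := by
  intro d hd
  obtain ⟨u, hu, v, hv, rfl⟩ := Finset.mem_add.mp (MvPolynomial.support_mul _ _ hd)
  rw [MvPolynomial.support_X] at hu
  simp only [Finset.mem_singleton] at hu
  subst hu
  have hsum : (∑ j, ((Finsupp.single i 1 + v : Fin 2 →₀ ℕ)) j)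
      = (∑ j, (Finsupp.single i 1 : Fin 2 →₀ ℕ) j) + ∑ j, v j := by
    simp [Finsupp.add_apply, Finset.sum_add_distrib]
  have hone : (∑ j, (Finsupp.single i 1 : Fin 2 →₀ ℕ) j) = 1 := by
    simp [Finsupp.single_apply, Finset.sum_ite_eq]
  rw [hsum, hone]
  exact Odd.add_odd odd_one (hp v hv)

set_option synthInstance.maxHeartbeats 1000000 in
set_option maxHeartbeats 1000000 in
lemma aux_smul_val (c : evenSubalgebra) (m : oddSubmodule) :
    ((c • m : oddSubmodule) : MvPolynomial (Fin 2) ℂ)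
      = (c : MvPolynomial (Fin 2) ℂ) * (m : MvPolynomial (Fin 2) ℂ) := by
  rfl

set_option synthInstance.maxHeartbeats 1000000 in
set_option maxHeartbeats 1000000 in
/-- **Example 2.1.5.3 (key claim).** For `S = ℂ[x,y]`, `R ⊆ S` the subalgebra of
polynomials all of whose monomials have even total degree, and `S′ ⊆ S` the
`R`-submodule of polynomials all of whose monomials have odd total degree, there is no
surjective `R`-linear map from `S′` onto `R`; equivalently, `R` is not a direct
summand of the `R`-module `S′`. -/
theorem no_surjection_odd_to_even :
    ¬ ∃ f : oddSubmodule →ₗ[evenSubalgebra] evenSubalgebra, Function.Surjective f := by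
  rintro ⟨f, hf⟩
  obtain ⟨P, hP⟩ := hf 1
  set p : MvPolynomial (Fin 2) ℂ := (P : MvPolynomial (Fin 2) ℂ) with hpdef
  have hpodd : p ∈ oddSubmodule := P.2
  set e0 : oddSubmodule := ⟨X 0, aux_X_mem_odd 0⟩ with he0
  set e1 : oddSubmodule := ⟨X 1, aux_X_mem_odd 1⟩ with he1
  set a : evenSubalgebra := f e0 with ha
  set b : evenSubalgebra := f e1 with hb
  set xp : evenSubalgebra := ⟨X 0 * p, aux_X_mul_mem_even P.2 0⟩ with hxp
  set xx : evenSubalgebra := ⟨X 0 * X 0, aux_X_mul_mem_even (aux_X_mem_odd 0) 0⟩ with hxx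
  set xy : evenSubalgebra := ⟨X 0 * X 1, aux_X_mul_mem_even (aux_X_mem_odd 1) 0⟩ with hxy
  have hX0 : (X 0 : MvPolynomial (Fin 2) ℂ) ≠ 0 := MvPolynomial.X_ne_zero 0
  -- equation 1 : X 0 * X 0 = (X 0 * p) * a
  have h1 : (X 0 : MvPolynomial (Fin 2) ℂ) * X 0 = (X 0 * p) * (a : MvPolynomial (Fin 2) ℂ) := by
    have hs : xx • P = xp • e0 := by
      apply Subtype.ext
      rw [aux_smul_val, aux_smul_val]
      show (X 0 * X 0) * p = (X 0 * p) * X 0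
      ring
    have := congrArg f hs
    rw [map_smul, map_smul, hP] at this
    have hv := congrArg (Subtype.val) this
    simpa [smul_eq_mul] using hv
  -- equation 2 : X 0 * X 1 = (X 0 * p) * b
  have h2 : (X 0 : MvPolynomial (Fin 2) ℂ) * X 1 = (X 0 * p) * (b : MvPolynomial (Fin 2) ℂ) := by
    have hs : xy • P = xp • e1 := by
      apply Subtype.ext
      rw [aux_smul_val, aux_smul_val]
      show (X 0 * X 1) * p = (X 0 * p) * X 1
      ring
    have := congrArg f hs
    rw [map_smul, map_smul, hP] at this
    have hv := congrArg (Subtype.val) this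
    simpa [smul_eq_mul] using hv
  have hxa : (X 0 : MvPolynomial (Fin 2) ℂ) = p * (a : MvPolynomial (Fin 2) ℂ) := by
    apply mul_left_cancel₀ hX0
    rw [h1]; ring
  have hxb : (X 1 : MvPolynomial (Fin 2) ℂ) = p * (b : MvPolynomial (Fin 2) ℂ) := by
    apply mul_left_cancel₀ hX0
    rw [h2]; ring
  -- constant term of a is zero
  have ha0 : MvPolynomial.coeff 0 (a : MvPolynomial (Fin 2) ℂ) = 0 := by
    have hab : (X 0 : MvPolynomial (Fin 2) ℂ) * (b : MvPolynomial (Fin 2) ℂ)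
        = (X 1 : MvPolynomial (Fin 2) ℂ) * (a : MvPolynomial (Fin 2) ℂ) := by
      rw [hxa, hxb]; ring
    have h := congrArg (MvPolynomial.coeff (Finsupp.single (1 : Fin 2) 1)) hab
    rw [MvPolynomial.coeff_X_mul', MvPolynomial.coeff_X_mul'] at h
    simpa [Finsupp.support_single_ne_zero] using h.symm
  -- every monomial of a has total degree ≥ 2
  have ha2 : ∀ d ∈ (a : MvPolynomial (Fin 2) ℂ).support, 2 ≤ ∑ j, d j := by
    intro d hd
    have heven := a.2 d hd
    have hdne : d ≠ 0 := by
      rintro rfl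
      exact (MvPolynomial.mem_support_iff.mp hd) ha0
    have hpos : 0 < ∑ j, d j := by
      rcases Finsupp.ne_iff.mp hdne with ⟨j, hj⟩
      simp only [Finsupp.coe_zero, Pi.zero_apply] at hj
      calc 0 < d j := Nat.pos_of_ne_zero hj
        _ ≤ ∑ j, d j := Finset.single_le_sum (fun _ _ => Nat.zero_le _) (Finset.mem_univ j)
    rcases heven with ⟨k, hk⟩
    omega
  -- but X 0 = p * a, whose monomials all have total degree ≥ 3 : contradiction
  have hmem : Finsupp.single (0 : Fin 2) 1 ∈ (p * (a : MvPolynomial (Fin 2) ℂ)).support := by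
    rw [← hxa, MvPolynomial.support_X]
    simp
  obtain ⟨u, hu, v, hv, huv⟩ := Finset.mem_add.mp (MvPolynomial.support_mul _ _ hmem)
  have hup : 1 ≤ ∑ j, u j := (hpodd u hu).pos
  have hva : 2 ≤ ∑ j, v j := ha2 v hv
  have hsum1 : (∑ j, (Finsupp.single (0 : Fin 2) 1) j) = 1 := by
    simp [Finsupp.single_apply, Finset.sum_ite_eq]
  have : (∑ j, u j) + (∑ j, v j) = 1 := by
    rw [← hsum1, ← huv]
    simp [Finsupp.add_apply, Finset.sum_add_distrib]
  omega
end
end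

section
/- Let k be a commutative ring, C a commutative k-algebra, and n ≥ 1. Let D : Matₙ(C) → Matₙ(C) be a k-linear map satisfying the Leibniz rule D(xy) = D(x)·y + x·D(y). Then there exist a k-linear derivation δ : C → C (i.e. δ(c₁c₂) = δ(c₁)c₂ + c₁δ(c₂)) and a matrix a ∈ Matₙ(C) such that D(x) = δ(x) + a·x − x·a for all x, where δ(x) denotes the entrywise application of δ to x. Moreover δ is uniquely determined by D, and a is unique up to adding a scalar matrix c·1 with c ∈ C. -/
/-- **(Lemma 3.2.2, trivialized form.)** Let `k` be a commutative ring, `C` a commutative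
`k`-algebra, and `n ≥ 1`.  Every `k`-linear map `D : Matₙ(C) → Matₙ(C)` satisfying the
Leibniz rule decomposes as `D(x) = δ(x) + a·x − x·a`, where `δ : C → C` is a `k`-linear
derivation applied entrywise and `a ∈ Matₙ(C)`.  Moreover `δ` is uniquely determined by
`D`, and `a` is unique up to adding a scalar matrix `c·1` with `c ∈ C`. -/
theorem matrix_derivation_decomposition (k : Type*) [CommRing k] (C : Type*) [CommRing C]
    [Algebra k C] (n : ℕ) (hn : 1 ≤ n)
    (D : Matrix (Fin n) (Fin n) C →ₗ[k] Matrix (Fin n) (Fin n) C)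
    (hD : ∀ x y : Matrix (Fin n) (Fin n) C, D (x * y) = D x * y + x * D y) :
    ∃ δ : C →ₗ[k] C,
      (∀ c₁ c₂ : C, δ (c₁ * c₂) = δ c₁ * c₂ + c₁ * δ c₂) ∧
      ∃ a : Matrix (Fin n) (Fin n) C,
        (∀ x : Matrix (Fin n) (Fin n) C, D x = x.map δ + (a * x - x * a)) ∧
        (∀ δ' : C →ₗ[k] C, (∀ c₁ c₂ : C, δ' (c₁ * c₂) = δ' c₁ * c₂ + c₁ * δ' c₂) →
          (∃ a' : Matrix (Fin n) (Fin n) C,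
            ∀ x : Matrix (Fin n) (Fin n) C, D x = x.map δ' + (a' * x - x * a')) →
          δ' = δ) ∧
        (∀ a' : Matrix (Fin n) (Fin n) C,
          (∀ x : Matrix (Fin n) (Fin n) C, D x = x.map δ + (a' * x - x * a')) →
          ∃ c : C, a' = a + c • (1 : Matrix (Fin n) (Fin n) C)) := by
  classical
  let i0 : Fin n := ⟨0, hn⟩
  -- D of a scalar matrix is central
  have hcomm : ∀ (c : C) (x : (Matrix (Fin n) (Fin n) C)), x * D (c • 1) = D (c • 1) * x := by
    intro c x
    have h1 := hD (c • 1) x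
    have h2 := hD x (c • 1)
    rw [smul_mul_assoc, one_mul] at h1
    rw [mul_smul_comm, mul_one] at h2
    have h3 := h1.symm.trans h2
    rw [smul_mul_assoc, one_mul, mul_smul_comm, mul_one] at h3
    rw [add_comm (c • D x)] at h3
    exact (add_right_cancel h3.symm)
  have hscalar : ∀ c : C, D (c • 1) = (D (c • 1) i0 i0) • (1 : (Matrix (Fin n) (Fin n) C)) := by
    intro c
    obtain ⟨r, hr⟩ := Matrix.mem_range_scalar_of_commute_single
      (M := D (c • 1)) (fun i j _ => hcomm c _)
    have hr' : D (c • 1) = r • (1 : (Matrix (Fin n) (Fin n) C)) := by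
      rw [← hr]
      ext i j
      by_cases h : i = j <;>
        simp [Matrix.scalar_apply, Matrix.one_apply, Matrix.diagonal_apply, h,
          Matrix.smul_apply, smul_eq_mul]
    have hri : D (c • 1) i0 i0 = r := by
      rw [hr']; simp [Matrix.smul_apply, Matrix.one_apply, smul_eq_mul]
    rw [hri]; exact hr'
  -- the derivation δ on C
  let δ : C →ₗ[k] C :=
    { toFun := fun c => D (c • 1) i0 i0
      map_add' := fun c₁ c₂ => by
        show D ((c₁ + c₂) • 1) i0 i0 = D (c₁ • 1) i0 i0 + D (c₂ • 1) i0 i0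
        rw [add_smul, map_add]; simp [Matrix.add_apply]
      map_smul' := fun r c => by
        show D ((r • c) • 1) i0 i0 = r • D (c • 1) i0 i0
        rw [smul_assoc, map_smul]; simp [Matrix.smul_apply] }
  have hδdef : ∀ c : C, δ c = D (c • 1) i0 i0 := fun c => rfl
  have hscalar' : ∀ c : C, D (c • 1) = δ c • (1 : (Matrix (Fin n) (Fin n) C)) := fun c => hscalar c
  have hder : ∀ c₁ c₂ : C, δ (c₁ * c₂) = δ c₁ * c₂ + c₁ * δ c₂ := by
    intro c₁ c₂
    have h1 : (c₁ * c₂) • (1 : (Matrix (Fin n) (Fin n) C)) = (c₁ • 1) * (c₂ • 1) := by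
      rw [smul_mul_smul_comm, one_mul]
    have h2 := hD (c₁ • (1 : (Matrix (Fin n) (Fin n) C))) (c₂ • 1)
    rw [← h1, hscalar' c₁, hscalar' c₂] at h2
    have h3 : D ((c₁ * c₂) • (1 : (Matrix (Fin n) (Fin n) C))) i0 i0 = δ c₁ * c₂ + c₁ * δ c₂ := by
      rw [h2]
      simp [smul_mul_smul_comm, mul_smul_comm, smul_mul_assoc, Matrix.add_apply,
        Matrix.smul_apply, Matrix.one_apply, mul_comm]
    rw [hδdef, h3]
  -- the map-δ entrywise operator and D' := D - map δ
  have hmapmul : ∀ x y : (Matrix (Fin n) (Fin n) C), (x * y).map δ = x.map δ * y + x * y.map δ := by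
    intro x y
    ext i j
    simp only [Matrix.map_apply, Matrix.mul_apply, Matrix.add_apply]
    rw [map_sum, ← Finset.sum_add_distrib]
    exact Finset.sum_congr rfl fun l _ => hder _ _
  set D' : (Matrix (Fin n) (Fin n) C) →ₗ[k] (Matrix (Fin n) (Fin n) C) := D - δ.mapMatrix with hD'def
  have hD'apply : ∀ x : (Matrix (Fin n) (Fin n) C), D' x = D x - x.map δ := by
    intro x; simp [hD'def, LinearMap.sub_apply]
  have hD'mul : ∀ x y : (Matrix (Fin n) (Fin n) C), D' (x * y) = D' x * y + x * D' y := by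
    intro x y
    rw [hD'apply, hD'apply, hD'apply, hD x y, hmapmul]
    noncomm_ring
  have hDsmul : ∀ (c : C) (x : (Matrix (Fin n) (Fin n) C)), D (c • x) = δ c • x + c • D x := by
    intro c x
    have h := hD (c • 1) x
    rw [smul_mul_assoc, one_mul, hscalar' c, smul_mul_assoc, one_mul,
      smul_mul_assoc, one_mul] at h
    exact h
  have hD'smul : ∀ (c : C) (x : (Matrix (Fin n) (Fin n) C)), D' (c • x) = c • D' x := by
    intro c x
    have h2 : (c • x).map δ = δ c • x + c • x.map δ := by
      ext i j
      simp only [Matrix.map_apply, Matrix.smul_apply, Matrix.add_apply, smul_eq_mul]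
      exact hder c (x i j)
    rw [hD'apply, hD'apply, hDsmul, h2, smul_sub]
    abel
  -- matrix units
  let E : Fin n → Fin n → (Matrix (Fin n) (Fin n) C) := fun i j => Matrix.single i j 1
  have hEE : ∀ m : Fin n, E m i0 * E i0 m = E m m := by
    intro m; simp [E]
  have hsum1 : ∑ m, E m m = (1 : (Matrix (Fin n) (Fin n) C)) := by
    ext i j
    simp only [Matrix.sum_apply, E, Matrix.single, Matrix.one_apply, Matrix.of_apply]
    by_cases h : i = j
    · subst h; simp
    · rw [if_neg h]
      refine Finset.sum_eq_zero fun m _ => ?_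
      rw [if_neg]
      rintro ⟨rfl, rfl⟩; exact h rfl
  have hsmulE : ∀ (c : C) (i j : Fin n), c • E i j = Matrix.single i j c := by
    intro c i j; simp [E]
  have hxe : ∀ (x : (Matrix (Fin n) (Fin n) C)) (m : Fin n), x * E m i0 = ∑ l, x l m • E l i0 := by
    intro x m
    simp only [hsmulE]
    ext i j
    rw [Matrix.sum_apply]
    by_cases hj : j = i0
    · subst hj
      rw [show (x * E m i0) i i0 = x i m * 1 from
        Matrix.mul_single_apply_same _ _ _ _ _, mul_one]
      rw [Finset.sum_eq_single i]
      · simp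
      · intro b _ hb
        exact Matrix.single_apply_of_row_ne hb _ _ _
      · intro h; exact absurd (Finset.mem_univ i) h
    · have hL : (x * E m i0) i j = 0 := by simp [E, hj]
      rw [hL]
      refine (Finset.sum_eq_zero fun l _ => ?_).symm
      exact Matrix.single_apply_of_col_ne _ _ (Ne.symm hj) _
  have hex : ∀ (x : (Matrix (Fin n) (Fin n) C)) (l : Fin n), E i0 l * x = ∑ m, x l m • E i0 m := by
    intro x l
    simp only [hsmulE]
    ext i j
    rw [Matrix.sum_apply]
    by_cases hi : i = i0
    · subst hi
      rw [show (E i0 l * x) i0 j = 1 * x l j from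
        Matrix.single_mul_apply_same _ _ _ _ _, one_mul]
      rw [Finset.sum_eq_single j]
      · simp
      · intro b _ hb
        exact Matrix.single_apply_of_col_ne _ _ hb _
      · intro h; exact absurd (Finset.mem_univ j) h
    · have hL : (E i0 l * x) i j = 0 := by simp [E, hi]
      rw [hL]
      refine (Finset.sum_eq_zero fun m _ => ?_).symm
      exact Matrix.single_apply_of_row_ne (Ne.symm hi) _ _ _
  -- the inner part
  set a : (Matrix (Fin n) (Fin n) C) := ∑ m, D' (E m i0) * E i0 m with ha
  have hkey : ∀ x : (Matrix (Fin n) (Fin n) C), D' x = a * x - x * a := by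
    intro x
    have hxa : x * a = a * x - D' x := by
      calc x * a = ∑ m, x * D' (E m i0) * E i0 m := by
            rw [ha, Finset.mul_sum]; simp [mul_assoc]
        _ = ∑ m, (D' (x * E m i0) - D' x * E m i0) * E i0 m := by
            refine Finset.sum_congr rfl fun m _ => ?_
            rw [hD'mul x (E m i0)]
            congr 1
            abel
        _ = (∑ m, D' (x * E m i0) * E i0 m) - ∑ m, D' x * (E m i0 * E i0 m) := by
            rw [← Finset.sum_sub_distrib]
            exact Finset.sum_congr rfl fun m _ => by rw [sub_mul, mul_assoc]
        _ = (∑ m, D' (x * E m i0) * E i0 m) - D' x := by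
            congr 1
            rw [← Finset.mul_sum]
            simp only [hEE]
            rw [hsum1, mul_one]
        _ = a * x - D' x := by
            congr 1
            calc ∑ m, D' (x * E m i0) * E i0 m
                = ∑ m, (∑ l, x l m • D' (E l i0)) * E i0 m := by
                  refine Finset.sum_congr rfl fun m _ => ?_
                  rw [hxe x m, map_sum]
                  congr 1
                  exact Finset.sum_congr rfl fun l _ => hD'smul _ _
              _ = ∑ m, ∑ l, x l m • (D' (E l i0) * E i0 m) := by
                  refine Finset.sum_congr rfl fun m _ => ?_
                  rw [Finset.sum_mul]
                  exact Finset.sum_congr rfl fun l _ => smul_mul_assoc _ _ _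
              _ = ∑ l, D' (E l i0) * ∑ m, x l m • E i0 m := by
                  rw [Finset.sum_comm]
                  refine Finset.sum_congr rfl fun l _ => ?_
                  rw [Finset.mul_sum]
                  exact Finset.sum_congr rfl fun m _ => (mul_smul_comm _ _ _).symm
              _ = ∑ l, D' (E l i0) * (E i0 l * x) := by
                  refine Finset.sum_congr rfl fun l _ => ?_
                  rw [hex x l]
              _ = a * x := by
                  rw [ha, Finset.sum_mul]
                  exact Finset.sum_congr rfl fun l _ => by rw [mul_assoc]
    rw [hxa]
    abel
  have hmain : ∀ x : (Matrix (Fin n) (Fin n) C), D x = x.map δ + (a * x - x * a) := by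
    intro x
    have h := hkey x
    rw [hD'apply] at h
    rw [← h]
    abel
  refine ⟨δ, hder, a, hmain, ?_, ?_⟩
  · rintro δ' hder' ⟨a', ha'⟩
    ext c
    have hc : ∀ b : (Matrix (Fin n) (Fin n) C), b * (c • (1 : (Matrix (Fin n) (Fin n) C))) = (c • (1 : (Matrix (Fin n) (Fin n) C))) * b := by
      intro b; rw [smul_mul_assoc, one_mul, mul_smul_comm, mul_one]
    have hmap : ∀ f : C →ₗ[k] C, (c • (1 : (Matrix (Fin n) (Fin n) C))).map f = f c • (1 : (Matrix (Fin n) (Fin n) C)) := by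
      intro f
      ext i j
      by_cases h : i = j <;>
        simp [Matrix.map_apply, Matrix.smul_apply, Matrix.one_apply, h, smul_eq_mul]
    have h1 := ha' (c • (1 : (Matrix (Fin n) (Fin n) C)))
    have h2 := hmain (c • (1 : (Matrix (Fin n) (Fin n) C)))
    rw [hmap, hc, sub_self, add_zero] at h1
    rw [hmap, hc, sub_self, add_zero] at h2
    have h3 : δ' c • (1 : (Matrix (Fin n) (Fin n) C)) = δ c • (1 : (Matrix (Fin n) (Fin n) C)) := h1.symm.trans h2
    have h4 := congrFun (congrFun h3 i0) i0
    simpa [Matrix.smul_apply, Matrix.one_apply] using h4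
  · intro a' ha'
    have hb : ∀ x : (Matrix (Fin n) (Fin n) C), (a' - a) * x = x * (a' - a) := by
      intro x
      have h1 := hmain x
      have h2 := ha' x
      rw [h1] at h2
      have h3 := add_left_cancel h2
      rw [sub_mul, mul_sub]
      rw [sub_eq_sub_iff_add_eq_add] at h3 ⊢
      rw [← h3]
      exact add_comm _ _
    obtain ⟨r, hr⟩ := Matrix.mem_range_scalar_of_commute_single
      (M := a' - a) (fun i j _ => (hb _).symm)
    refine ⟨r, ?_⟩
    have h5 : a' - a = r • (1 : (Matrix (Fin n) (Fin n) C)) := by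
      rw [← hr]
      ext i j
      by_cases h : i = j <;>
        simp [Matrix.scalar_apply, Matrix.one_apply, Matrix.diagonal_apply, h,
          Matrix.smul_apply, smul_eq_mul]
    rw [← h5]
    abel
end

section
/- Let R = ℂ[y₁,y₂,y₃,y₄]/(y₁y₃ − y₂y₄), the coordinate ring of the conifold, and let I ⊆ R be the ideal generated by (the classes of) y₁ and y₂. Then, in the fraction field K of R, the fractional ideal I⁻¹ = {x ∈ K : x·I ⊆ R} equals the R-submodule of K generated by 1 and y₄/y₁, and this submodule also equals the R-submodule generated by 1 and y₃/y₂. -/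
set_option synthInstance.maxHeartbeats 1000000
set_option maxHeartbeats 1000000


noncomputable section
open MvPolynomial

/-- The coordinate ring `R = ℂ[y₁,y₂,y₃,y₄]/(y₁y₃ − y₂y₄)` of the conifold. -/
abbrev ConifoldRing : Type :=
  MvPolynomial (Fin 4) ℂ ⧸
    Ideal.span {(X 0 * X 2 - X 1 * X 3 : MvPolynomial (Fin 4) ℂ)}

/-- The class of the variable `yᵢ` in the conifold ring. -/
def y (i : Fin 4) : ConifoldRing :=
  Ideal.Quotient.mk _ (X i)

/-- The ideal `I = (y₁, y₂)` of the conifold ring. -/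
def conifoldI : Ideal ConifoldRing := Ideal.span {y 0, y 1}

lemma conifold_rel : y 0 * y 2 = y 1 * y 3 := by
  have h : (Ideal.Quotient.mk (Ideal.span {(X 0 * X 2 - X 1 * X 3 : MvPolynomial (Fin 4) ℂ)})
      (X 0 * X 2 - X 1 * X 3)) = 0 :=
    Ideal.Quotient.eq_zero_iff_mem.2 (Ideal.subset_span rfl)
  rw [map_sub, map_mul, map_mul, sub_eq_zero] at h
  exact h

/-- substitution killing `X 0` -/
def kill0 : MvPolynomial (Fin 4) ℂ →ₐ[ℂ] MvPolynomial (Fin 4) ℂ :=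
  aeval (fun i => if i = 0 then 0 else X i)

lemma X0_dvd_sub_kill0 (g : MvPolynomial (Fin 4) ℂ) : (X 0 : MvPolynomial (Fin 4) ℂ) ∣ (g - kill0 g) := by
  induction g using MvPolynomial.induction_on with
  | C a => simp [kill0]
  | add p q hp hq => simpa [map_add, sub_add_sub_comm] using dvd_add hp hq
  | mul_X p i hp =>
      have : p * X i - kill0 (p * X i)
          = (p - kill0 p) * X i + kill0 p * (X i - kill0 (X i)) := by
        simp [map_mul]; ring
      rw [this]
      refine dvd_add (Dvd.dvd.mul_right hp _) (Dvd.dvd.mul_left ?_ _)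
      by_cases h : i = 0
      · subst h; simp [kill0]
      · simp [kill0, h]

lemma X0_dvd_of_kill0_eq_zero {g : MvPolynomial (Fin 4) ℂ} (h : kill0 g = 0) :
    (X 0 : MvPolynomial (Fin 4) ℂ) ∣ g := by
  simpa [h] using X0_dvd_sub_kill0 g

lemma y_ne_zero_aux (i : Fin 4) : y i ≠ 0 := by
  intro h
  have hmem : (X i : MvPolynomial (Fin 4) ℂ) ∈
      Ideal.span {(X 0 * X 2 - X 1 * X 3 : MvPolynomial (Fin 4) ℂ)} :=
    Ideal.Quotient.eq_zero_iff_mem.mp h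
  obtain ⟨t, ht⟩ := Ideal.mem_span_singleton'.mp hmem
  have := congrArg (eval (fun j => if j = i then (1:ℂ) else 0)) ht
  simp only [eval_mul, eval_sub, eval_X, if_pos rfl] at this
  fin_cases i <;> simp_all

lemma key_lemma {r s : ConifoldRing} (h : r * y 1 = s * y 0) :
    r ∈ Ideal.span ({y 0, y 3} : Set ConifoldRing) := by
  obtain ⟨p, rfl⟩ := Ideal.Quotient.mk_surjective r
  obtain ⟨q, rfl⟩ := Ideal.Quotient.mk_surjective s
  have hmem : p * X 1 - q * X 0 ∈
      Ideal.span {(X 0 * X 2 - X 1 * X 3 : MvPolynomial (Fin 4) ℂ)} := by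
    rw [← Ideal.Quotient.eq_zero_iff_mem, map_sub, map_mul, map_mul, sub_eq_zero]
    exact h
  obtain ⟨t, ht⟩ := Ideal.mem_span_singleton'.mp hmem
  -- t * (X0*X2 - X1*X3) = p * X1 - q * X0
  have hfac : (X 0 : MvPolynomial (Fin 4) ℂ) ∣ (p + t * X 3) := by
    apply X0_dvd_of_kill0_eq_zero
    have := congrArg kill0 ht
    simp only [map_sub, map_mul, map_add] at this ⊢
    have h0 : kill0 (X 0) = 0 := by simp [kill0]
    have h1 : kill0 (X 1) = X 1 := by simp [kill0]
    rw [h0, h1] at this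
    have : (X 1 : MvPolynomial (Fin 4) ℂ) * (kill0 p + kill0 t * kill0 (X 3)) = 0 := by
      linear_combination -this
    rcases mul_eq_zero.mp this with h' | h'
    · exact absurd h' (X_ne_zero 1)
    · exact h'
  obtain ⟨u, hu⟩ := hfac
  -- p = X0 * u - t * X3
  have hp : p = X 0 * u - t * X 3 := by linear_combination hu
  refine Ideal.mem_span_pair.mpr ⟨Ideal.Quotient.mk _ u, -(Ideal.Quotient.mk _ t), ?_⟩
  rw [hp]
  simp only [y, map_sub, map_mul]
  ring

lemma smul_eq_aux [IsDomain ConifoldRing] (a : ConifoldRing) (x : FractionRing ConifoldRing) :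
    a • x = algebraMap ConifoldRing (FractionRing ConifoldRing) a * x := Algebra.smul_def a x

set_option synthInstance.maxHeartbeats 1000000 in
set_option maxHeartbeats 2000000 in
/-- **Example 2.1.4 (computation of `I⁻¹`).** Let `R` be the conifold ring, an integral
domain, `K` its fraction field, and `I = (y₁, y₂) ⊆ R`.  The fractional ideal
`I⁻¹ = {x ∈ K : x·I ⊆ R}` equals the `R`-submodule of `K` generated by `1` and `y₄/y₁`,
and this submodule also equals the `R`-submodule generated by `1` and `y₃/y₂`. -/
theorem conifold_inverse_fractional_ideal [IsDomain ConifoldRing] :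
    {x : FractionRing ConifoldRing |
        ∀ a ∈ conifoldI, ∃ r : ConifoldRing,
          x * algebraMap ConifoldRing (FractionRing ConifoldRing) a
            = algebraMap ConifoldRing (FractionRing ConifoldRing) r}
      = ↑(Submodule.span ConifoldRing
          ({1, algebraMap ConifoldRing (FractionRing ConifoldRing) (y 3)
                / algebraMap ConifoldRing (FractionRing ConifoldRing) (y 0)} :
            Set (FractionRing ConifoldRing)))
    ∧ ↑(Submodule.span ConifoldRing
          ({1, algebraMap ConifoldRing (FractionRing ConifoldRing) (y 3)
                / algebraMap ConifoldRing (FractionRing ConifoldRing) (y 0)} :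
            Set (FractionRing ConifoldRing)))
      = (↑(Submodule.span ConifoldRing
          ({1, algebraMap ConifoldRing (FractionRing ConifoldRing) (y 2)
                / algebraMap ConifoldRing (FractionRing ConifoldRing) (y 1)} :
            Set (FractionRing ConifoldRing))) : Set (FractionRing ConifoldRing)) := by
  have inj : Function.Injective (algebraMap ConifoldRing (FractionRing ConifoldRing)) :=
    IsFractionRing.injective _ _
  set A := algebraMap ConifoldRing (FractionRing ConifoldRing) with hA
  have h0 : A (y 0) ≠ 0 := fun h => y_ne_zero_aux 0 (inj (by simpa using h))
  have h1 : A (y 1) ≠ 0 := fun h => y_ne_zero_aux 1 (inj (by simpa using h))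
  have relK : A (y 0) * A (y 2) = A (y 1) * A (y 3) := by
    rw [← map_mul, ← map_mul, conifold_rel]
  have hd : A (y 3) / A (y 0) = A (y 2) / A (y 1) := by
    rw [div_eq_div_iff h0 h1]; linear_combination -relK
  constructor
  · ext x
    simp only [Set.mem_setOf_eq, SetLike.mem_coe]
    constructor
    · intro hx
      obtain ⟨r, hr⟩ := hx (y 0) (Ideal.subset_span (Set.mem_insert _ _))
      obtain ⟨s, hs⟩ := hx (y 1) (Ideal.subset_span (Set.mem_insert_of_mem _ rfl))
      have hrs : r * y 1 = s * y 0 := by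
        apply inj
        rw [map_mul, map_mul, ← hr, ← hs]; ring
      obtain ⟨a, b, hab⟩ := Ideal.mem_span_pair.mp (key_lemma hrs)
      refine Submodule.mem_span_pair.mpr ⟨a, b, ?_⟩
      simp only [smul_eq_aux, mul_one, ← hA]
      have hx0 : x = A r / A (y 0) := by rw [eq_div_iff h0]; exact hr
      rw [hx0, ← hab, map_add, map_mul, map_mul]
      field_simp
    · intro hx c hc
      obtain ⟨a, b, hab⟩ := Submodule.mem_span_pair.mp hx
      obtain ⟨u, v, huv⟩ := Ideal.mem_span_pair.mp hc
      refine ⟨a * c + b * (u * (y 3) + v * (y 2)), ?_⟩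
      rw [← hab, ← huv]
      simp only [smul_eq_aux, mul_one, ← hA]
      simp only [map_add, map_mul]
      field_simp
      linear_combination (-(A b * A v)) * relK
  · rw [hd]
end
end

section
/- Let R = ℂ[y₁,y₂,y₃,y₄]/(y₁y₃ − y₂y₄), the coordinate ring of the conifold, and let I ⊆ R be the ideal generated by (the classes of) y₁ and y₂. Then every R-linear endomorphism of the R-module I is multiplication by a uniquely determined element of R; that is, the natural ring homomorphism R → End_R(I) sending r to multiplication by r is bijective. -/
noncomputable section
open MvPolynomial

namespace ConifoldAux

abbrev P4 : Type := MvPolynomial (Fin 4) ℂ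

def F : P4 := X 0 * X 2 - X 1 * X 3

/-- The algebra map substituting `X j := 0`. -/
def kill (j : Fin 4) : P4 →ₐ[ℂ] P4 :=
  aeval (fun i => if i = j then 0 else X i)

lemma kill_X_self (j : Fin 4) : kill j (X j) = 0 := by
  simp [kill]

lemma kill_X_of_ne {j i : Fin 4} (h : i ≠ j) : kill j (X i) = X i := by
  simp [kill, h]

lemma sub_kill_mem (j : Fin 4) (p : P4) :
    p - kill j p ∈ Ideal.span {(X j : P4)} := by
  induction p using MvPolynomial.induction_on with
  | C a => simp [kill]
  | add p q hp hq =>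
      have h := Ideal.add_mem _ hp hq
      have : p + q - kill j (p + q) = (p - kill j p) + (q - kill j q) := by
        rw [map_add]; ring
      rw [this]; exact h
  | mul_X p i hp =>
      rw [map_mul]
      by_cases h : i = j
      · subst h
        rw [kill_X_self, mul_zero, sub_zero]
        exact Ideal.mem_span_singleton.2 ⟨p, mul_comm _ _⟩
      · rw [kill_X_of_ne h]
        have : p * X i - kill j p * X i = (p - kill j p) * X i := by ring
        rw [this]
        exact Ideal.mul_mem_right _ _ hp

lemma X_dvd_of_kill_eq_zero {j : Fin 4} {p : P4} (h : kill j p = 0) :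
    (X j : P4) ∣ p := by
  have := sub_kill_mem j p
  rw [h, sub_zero] at this
  exact Ideal.mem_span_singleton.1 this

lemma kill0_F : kill 0 F = -(X 1 * X 3) := by
  rw [F, map_sub, map_mul, map_mul, kill_X_self,
    kill_X_of_ne (by decide : (1 : Fin 4) ≠ 0), kill_X_of_ne (by decide : (3 : Fin 4) ≠ 0)]
  ring

/-- If `p * X 0` is a multiple of `F`, then so is `p`. -/
lemma dvd_of_dvd_mul_X0 {p : P4} (h : F ∣ p * X 0) : F ∣ p := by
  obtain ⟨g, hg⟩ := h
  -- X 0 divides g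
  have hk : kill 0 g * (-(X 1 * X 3)) = 0 := by
    have h' := congrArg (kill 0) hg
    rw [map_mul, map_mul, kill_X_self, kill0_F] at h'
    linear_combination -h'
  have hX13 : (-(X 1 * X 3) : P4) ≠ 0 := by
    simp [MvPolynomial.X_ne_zero, mul_ne_zero]
  have hg0 : kill 0 g = 0 := by
    rcases mul_eq_zero.1 hk with h' | h'
    · exact h'
    · exact absurd h' hX13
  obtain ⟨g', hg'⟩ := X_dvd_of_kill_eq_zero hg0
  refine ⟨g', ?_⟩
  have hx : (X 0 : P4) ≠ 0 := MvPolynomial.X_ne_zero 0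
  apply mul_right_cancel₀ hx
  calc p * X 0 = F * g := hg
    _ = F * (X 0 * g') := by rw [← hg']
    _ = F * g' * X 0 := by ring

/-- In the quotient ring, multiplication by `y 0` is injective. -/
lemma quot_cancel {z : ConifoldRing} (h : z * y 0 = 0) : z = 0 := by
  obtain ⟨Z, rfl⟩ := Ideal.Quotient.mk_surjective z
  have hmem : Z * X 0 ∈ Ideal.span {F} := by
    rw [← Ideal.Quotient.eq_zero_iff_mem]
    rw [map_mul]; exact h
  have hdvd : F ∣ Z := dvd_of_dvd_mul_X0 (Ideal.mem_span_singleton.1 hmem)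
  rw [Ideal.Quotient.eq_zero_iff_mem]
  exact Ideal.mem_span_singleton.2 hdvd

lemma y_rel : y 1 * y 3 = y 0 * y 2 := by
  have : (X 1 * X 3 - X 0 * X 2 : P4) ∈ Ideal.span {F} := by
    have : (X 1 * X 3 - X 0 * X 2 : P4) = -F := by rw [F]; ring
    rw [this]
    exact neg_mem (Ideal.subset_span rfl)
  have h := Ideal.Quotient.eq.2 this
  rw [map_mul, map_mul] at h
  exact h

/-- Key step: if `t * y 1 ^ 2 ∈ (y 0)` then `t ∈ (y 0, y 3)`. -/
lemma quot_step {t : ConifoldRing} (h : ∃ c, t * y 1 ^ 2 = y 0 * c) :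
    ∃ u v, t = u * y 0 + v * y 3 := by
  obtain ⟨c, hc⟩ := h
  obtain ⟨T, rfl⟩ := Ideal.Quotient.mk_surjective t
  obtain ⟨C0, rfl⟩ := Ideal.Quotient.mk_surjective c
  have hmem : T * X 1 ^ 2 - X 0 * C0 ∈ Ideal.span {F} := by
    rw [← Ideal.Quotient.mk_eq_mk_iff_sub_mem]
    rw [map_mul, map_mul, map_pow]; exact hc
  obtain ⟨G, hG⟩ := Ideal.mem_span_singleton.1 hmem
  -- apply kill 0
  have h0 : kill 0 T * X 1 ^ 2 = kill 0 G * (-(X 1 * X 3)) := by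
    have h' := congrArg (kill 0) hG
    rw [map_sub, map_mul, map_mul, map_mul, map_pow, kill_X_self,
      kill_X_of_ne (by decide : (1 : Fin 4) ≠ 0), kill0_F] at h'
    linear_combination h'
  have hX1 : (X 1 : P4) ≠ 0 := MvPolynomial.X_ne_zero 1
  have h1 : kill 0 T * X 1 = -(kill 0 G * X 3) := by
    apply mul_right_cancel₀ hX1
    calc kill 0 T * X 1 * X 1 = kill 0 T * X 1 ^ 2 := by ring
      _ = kill 0 G * (-(X 1 * X 3)) := h0
      _ = -(kill 0 G * X 3) * X 1 := by ring
  -- apply kill 3 to conclude X 3 ∣ kill 0 T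
  have h3 : kill 3 (kill 0 T) * X 1 = 0 := by
    have h' := congrArg (kill 3) h1
    rw [map_mul, map_neg, map_mul, kill_X_self,
      kill_X_of_ne (by decide : (1 : Fin 4) ≠ 3)] at h'
    linear_combination h'
  have h3' : kill 3 (kill 0 T) = 0 := by
    rcases mul_eq_zero.1 h3 with h' | h'
    · exact h'
    · exact absurd h' hX1
  obtain ⟨d, hd⟩ := X_dvd_of_kill_eq_zero h3'
  obtain ⟨e, he⟩ := Ideal.mem_span_singleton.1 (sub_kill_mem 0 T)
  -- T = X 0 * e + X 3 * d
  have hT : T = X 0 * e + X 3 * d := by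
    have : T - kill 0 T = X 0 * e := he
    rw [hd] at this
    linear_combination this
  refine ⟨Ideal.Quotient.mk _ e, Ideal.Quotient.mk _ d, ?_⟩
  rw [hT]
  simp [y, map_add, map_mul, mul_comm]

end ConifoldAux

set_option synthInstance.maxHeartbeats 1000000 in
set_option maxHeartbeats 2000000 in
/-- **Example 2.1.4 (diagonal entry `End_R(I) = R`).** Let `R` be the conifold ring and
`I = (y₁, y₂) ⊆ R`.  Every `R`-linear endomorphism of the `R`-module `I` is
multiplication by a uniquely determined element of `R`; that is, the natural ring
homomorphism `R → End_R(I)` sending `r` to multiplication by `r` is bijective. -/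
theorem conifold_end_of_ideal :
    Function.Bijective
      (Module.toModuleEnd ConifoldRing (M := ↥conifoldI) : ConifoldRing →+* _) := by
  have h0 : y 0 ∈ conifoldI := Ideal.subset_span (by left; rfl)
  have h1 : y 1 ∈ conifoldI := Ideal.subset_span (by right; rfl)
  set x0 : ↥conifoldI := ⟨y 0, h0⟩
  set x1 : ↥conifoldI := ⟨y 1, h1⟩
  constructor
  · -- injectivity
    intro r r' h
    have hx := congrArg (fun e : Module.End ConifoldRing ↥conifoldI => ((e x0 : ↥conifoldI) : ConifoldRing)) h
    simp only [Module.toModuleEnd_apply, DistribSMul.toLinearMap_apply,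
      Submodule.coe_smul, smul_eq_mul] at hx
    have : (r - r') * y 0 = 0 := by
      have : (r - r') * y 0 = r * y 0 - r' * y 0 := by ring
      rw [this]
      simpa [x0] using sub_eq_zero.2 hx
    have := ConifoldAux.quot_cancel this
    exact sub_eq_zero.1 this
  · -- surjectivity
    intro φ
    set a : ConifoldRing := ((φ x0 : ↥conifoldI) : ConifoldRing) with ha_def
    set b : ConifoldRing := ((φ x1 : ↥conifoldI) : ConifoldRing) with hb_def
    have hrel : y 1 * a = y 0 * b := by
      have hsx : y 1 • x0 = y 0 • x1 := by
        apply Subtype.ext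
        simp only [Submodule.coe_smul, smul_eq_mul, x0, x1]
        ring
      have := congrArg (fun z : ↥conifoldI => (z : ConifoldRing)) (congrArg φ hsx)
      simpa [map_smul, smul_eq_mul] using this
    obtain ⟨s, t, hst⟩ := Ideal.mem_span_pair.1 (φ x0).2
    have hst : s * y 0 + t * y 1 = a := hst
    have hstep : ∃ c, t * y 1 ^ 2 = y 0 * c := by
      refine ⟨b - s * y 1, ?_⟩
      linear_combination y 1 * hst + hrel
    obtain ⟨u, v, ht⟩ := ConifoldAux.quot_step hstep
    set r : ConifoldRing := s + u * y 1 + v * y 2 with hr_def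
    have hy := ConifoldAux.y_rel
    have ha : a = r * y 0 := by
      rw [hr_def]
      linear_combination -hst + y 1 * ht + v * hy
    have hb : b = r * y 1 := by
      have : (b - r * y 1) * y 0 = 0 := by
        linear_combination -hrel + y 1 * ha
      have := ConifoldAux.quot_cancel this
      exact sub_eq_zero.1 this
    refine ⟨r, ?_⟩
    apply LinearMap.ext
    intro x
    apply Subtype.ext
    obtain ⟨p, q, hpq⟩ := Ideal.mem_span_pair.1 x.2
    have hx : x = p • x0 + q • x1 := by
      apply Subtype.ext
      simp only [Submodule.coe_add, Submodule.coe_smul, smul_eq_mul, x0, x1]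
      exact hpq.symm
    have lhs : ((Module.toModuleEnd ConifoldRing (M := ↥conifoldI) r) x : ConifoldRing) = r * (x : ConifoldRing) := by
      simp [Module.toModuleEnd_apply, DistribSMul.toLinearMap_apply, smul_eq_mul]
    rw [lhs, hx]
    simp only [map_add, map_smul, Submodule.coe_add, Submodule.coe_smul, smul_eq_mul]
    rw [← ha_def, ← hb_def, ha, hb]
    ring
end
end

section
/- Let Λ be an additive abelian group, n ≥ 1, and let S₀ ⊆ Λ be a subset containing 0 and let S(i,j) ⊆ Λ for i, j ∈ {1,…,n} be nonempty subsets such that S(i,i) = S₀ for all i and S(i,j) + S(j,k) ⊆ S(i,k) for all i, j, k. Let B be the subset of the n×n matrix algebra over the group algebra ℂ[Λ] consisting of all matrices whose (i,j) entry is supported on S(i,j). Then B is a unital ℂ-subalgebra of Matₙ(ℂ[Λ]), and the center of B consists exactly of the scalar matrices c·1 with c ∈ ℂ[Λ] supported on S₀. -/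
open scoped Pointwise

/-- The set of `n×n` matrices over the group algebra `ℂ[Λ]` whose `(i,j)` entry is
supported on the subset `S i j ⊆ Λ`. -/
def settledMatrices (Λ : Type*) [AddCommGroup Λ] (n : ℕ) (S : Fin n → Fin n → Set Λ) :
    Set (Matrix (Fin n) (Fin n) (AddMonoidAlgebra ℂ Λ)) :=
  {x | ∀ i j, ↑(x i j).coeff.support ⊆ S i j}

/-- **(Definition 2.1.6.1 and its property (a), abstracted.)** Let `Λ` be an additive
abelian group, `n ≥ 1`, `S₀ ⊆ Λ` a subset containing `0`, and `S(i,j) ⊆ Λ` nonempty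
subsets with `S(i,i) = S₀` and `S(i,j) + S(j,k) ⊆ S(i,k)`.  Let `B ⊆ Matₙ(ℂ[Λ])` consist
of the matrices whose `(i,j)` entry is supported on `S(i,j)`.  Then `B` is a unital
`ℂ`-subalgebra of `Matₙ(ℂ[Λ])`, and the center of `B` consists exactly of the scalar
matrices `c·1` with `c ∈ ℂ[Λ]` supported on `S₀`. -/
theorem settledMatrices_subalgebra_and_center (Λ : Type*) [AddCommGroup Λ]
    (n : ℕ) (hn : 1 ≤ n) (S₀ : Set Λ) (h0 : (0 : Λ) ∈ S₀)
    (S : Fin n → Fin n → Set Λ) (hne : ∀ i j, (S i j).Nonempty)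
    (hdiag : ∀ i, S i i = S₀) (hadd : ∀ i j k, S i j + S j k ⊆ S i k) :
    (∃ A : Subalgebra ℂ (Matrix (Fin n) (Fin n) (AddMonoidAlgebra ℂ Λ)),
        (A : Set (Matrix (Fin n) (Fin n) (AddMonoidAlgebra ℂ Λ))) = settledMatrices Λ n S) ∧
    (∀ x ∈ settledMatrices Λ n S,
      ((∀ y ∈ settledMatrices Λ n S, x * y = y * x) ↔
        ∃ c : AddMonoidAlgebra ℂ Λ, ↑c.coeff.support ⊆ S₀ ∧
          x = c • (1 : Matrix (Fin n) (Fin n) (AddMonoidAlgebra ℂ Λ)))) := by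
  classical
  -- cancellation of multiplication by `single s 1`
  have cancel : ∀ (s : Λ) (a b : AddMonoidAlgebra ℂ Λ),
      a * AddMonoidAlgebra.single s 1 = b * AddMonoidAlgebra.single s 1 → a = b := by
    intro s a b h
    have h2 := congrArg (· * AddMonoidAlgebra.single (-s) (1 : ℂ)) h
    simpa [mul_assoc, AddMonoidAlgebra.single_mul_single,
      ← AddMonoidAlgebra.one_def] using h2
  -- the standard test matrices lie in `settledMatrices`
  have std_mem : ∀ (i j : Fin n) (s : Λ), s ∈ S i j →
      Matrix.single i j (AddMonoidAlgebra.single s (1 : ℂ)) ∈ settledMatrices Λ n S := by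
    intro i j s hs p q
    by_cases h : i = p ∧ j = q
    · obtain ⟨rfl, rfl⟩ := h
      rw [Matrix.single_apply_same]
      intro t ht
      have : t = s := by
        have := Finsupp.support_single_subset (Finset.mem_coe.mp ht)
        simpa using this
      subst this; exact hs
    · rw [Matrix.single_apply_of_ne (h := h)]
      simp
  constructor
  · -- `settledMatrices` is a subalgebra
    refine ⟨{ carrier := settledMatrices Λ n S
              mul_mem' := ?_
              one_mem' := ?_
              add_mem' := ?_
              zero_mem' := ?_
              algebraMap_mem' := ?_ }, rfl⟩
    · -- mul
      intro x y hx hy i k a ha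
      change ∀ i j, _ at hx hy
      rw [show (x * y) i k = ∑ j, x i j * y j k from Matrix.mul_apply, AddMonoidAlgebra.coeff_sum] at ha
      obtain ⟨j, -, haj⟩ := Finsupp.mem_support_finset_sum a (Finset.mem_coe.mp ha)
      have h2 := AddMonoidAlgebra.support_coeff_mul_subset (x i j) (y j k) haj
      rw [Finset.mem_add] at h2
      obtain ⟨u, hu, v, hv, rfl⟩ := h2
      exact hadd i j k (Set.add_mem_add (hx i j hu) (hy j k hv))
    · -- one
      intro i j a ha
      by_cases hij : i = j
      · subst hij
        rw [Matrix.one_apply_eq] at ha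
        have : a = 0 := by
          simpa [AddMonoidAlgebra.one_def] using ha
        subst this
        rw [hdiag i]; exact h0
      · rw [Matrix.one_apply_ne hij] at ha
        simp at ha
    · -- add
      intro x y hx hy i j a ha
      rw [Matrix.add_apply] at ha
      have := Finsupp.support_add (Finset.mem_coe.mp ha)
      rcases Finset.mem_union.mp this with h | h
      · exact hx i j h
      · exact hy i j h
    · -- zero
      intro i j a ha
      simp [Matrix.zero_apply] at ha
    · -- algebraMap
      intro r i j a ha
      rw [Matrix.algebraMap_matrix_apply] at ha
      by_cases hij : i = j
      · rw [if_pos hij] at ha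
        have : a = 0 := by
          have := Finsupp.support_single_subset
            (Finset.mem_coe.mp (by simpa [AddMonoidAlgebra.coe_algebraMap] using ha))
          simpa using this
        subst this
        subst hij; rw [hdiag i]; exact h0
      · rw [if_neg hij] at ha
        simp at ha
  · -- center
    intro x hx
    constructor
    · intro hcomm
      set i0 : Fin n := ⟨0, hn⟩ with hi0
      -- all diagonal entries coincide
      have hdiageq : ∀ i j : Fin n, x i i = x j j := by
        intro i j
        obtain ⟨s, hs⟩ := hne i j
        have h := hcomm _ (std_mem i j s hs)
        have h1 := congrFun (congrFun h i) j
        rw [Matrix.mul_single_apply_same,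
          Matrix.single_mul_apply_same] at h1
        exact cancel s _ _ (by rw [h1, mul_comm])
      -- off-diagonal entries vanish
      have hoff : ∀ p q : Fin n, p ≠ q → x p q = 0 := by
        intro p q hpq
        obtain ⟨s, hs⟩ := hne q q
        have h := hcomm _ (std_mem q q s hs)
        have h1 := congrFun (congrFun h p) q
        rw [Matrix.mul_single_apply_same,
          Matrix.single_mul_apply_of_ne (h := hpq)] at h1
        exact cancel s _ _ (by rw [h1, zero_mul])
      refine ⟨x i0 i0, by rw [← hdiag i0]; exact hx i0 i0, ?_⟩
      refine Matrix.ext fun i j => ?_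
      by_cases hij : i = j
      · subst hij
        rw [Matrix.smul_apply, Matrix.one_apply_eq, smul_eq_mul, mul_one]
        exact hdiageq i i0
      · rw [Matrix.smul_apply, Matrix.one_apply_ne hij, smul_zero]
        exact hoff i j hij
    · rintro ⟨c, hc, rfl⟩ y hy
      rw [smul_mul_assoc, one_mul, mul_smul_comm, mul_one]
end
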